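/- arXiv:2605.03203 — 2 statements merged into one kernel-verified Lean document; each statement's English description precedes it below -/
import Mathlib

section
/- The sequence S(N) of sliding-weighted composition sums satisfies the linear recurrence S(N) = 5·S(N-1) − 7·S(N-2) + 4·S(N-3) for all N ≥ 5. -/
/-- Sliding-product weight `∏_{i=1}^{k-1} (π_i + π_{i+1} - 1)`. -/
def slidingWeight (l : List ℕ) : ℕ :=
  ((l.zip l.tail).map fun p => p.1 + p.2 - 1).prod

/-- `S N`: the sum of the sliding weight over all compositions of `N`. -/
def S (N : ℕ) : ℕ := ∑ c : Composition N, slidingWeight c.blocks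

/-!
Split a composition into its first block `a` and the rest `l`. The weight of `a :: l` is affine
in `a ≥ 1`, with value `w(1 :: l)` at `a = 1` and slope `w(2 :: l) - w(1 :: l)`, which is `w(l)`
for nonempty `l`; moreover `w(1 :: a :: l) = a · w(a :: l)`. Hence both `S(n + 1)` and
`C(n + 1) = ∑_c w(1 :: c)` are convolutions of the pair `(S, C)` with kernels polynomial in the
size of the first block. Taking finite differences (once for `S`, twice for `C`) turns these
convolutions into a recurrence involving only partial sums, and eliminating `C` and the partial
sums leaves the order-three recurrence.
-/

open Finset

namespace Composition

theorem exists_blocks_eq_cons {n : ℕ} (c : Composition (n + 1)) :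
    ∃ a t, 0 < a ∧ a + t.sum = n + 1 ∧ c.blocks = a :: t := by
  cases h : c.blocks with
  | nil => simpa [h] using c.blocks_sum
  | cons a t => exact ⟨a, t, c.blocks_pos (by simp [h]), by simpa [h] using c.blocks_sum, rfl⟩

/-- A composition of `n + 1` is a first block `n + 1 - j` followed by a composition of `j`. -/
def consEquiv (n : ℕ) : (Σ j : Fin (n + 1), Composition j) ≃ Composition (n + 1) where
  toFun p :=
    { blocks := (n + 1 - p.1) :: p.2.blocks
      blocks_pos := by
        rintro i (_ | ⟨_, hi⟩)
        · omega
        · exact p.2.blocks_pos hi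
      blocks_sum := by simp [p.2.blocks_sum] }
  invFun c :=
    ⟨⟨c.blocks.tail.sum, by obtain ⟨a, t, ha, hsum, h⟩ := c.exists_blocks_eq_cons; simp [h]; omega⟩,
      ⟨c.blocks.tail, fun hi => c.blocks_pos (List.mem_of_mem_tail hi), rfl⟩⟩
  left_inv := by
    rintro ⟨⟨j, hj⟩, c⟩
    change Composition j at c
    revert hj
    obtain ⟨blocks, hpos, rfl⟩ := c
    intro hj
    rfl
  right_inv c := by
    obtain ⟨a, t, ha, hsum, h⟩ := c.exists_blocks_eq_cons
    ext1
    simp [h]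
    omega

theorem sum_succ_eq_sum_range_cons {M : Type*} [AddCommMonoid M] (f : List ℕ → M) (n : ℕ) :
    ∑ c : Composition (n + 1), f c.blocks =
      ∑ j ∈ range (n + 1), ∑ c : Composition j, f ((n + 1 - j) :: c.blocks) := by
  rw [← (consEquiv n).sum_comp, Fintype.sum_sigma]
  exact Fin.sum_univ_eq_sum_range (fun j => ∑ c : Composition j, f ((n + 1 - j) :: c.blocks)) _

end Composition

section LinearRecurrence

variable {R : Type*} [CommRing R]

theorem succ_succ_eq_of_forall_eq_sum_range {u : ℕ → R} {f : ℕ → ℕ → R}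
    (hu : ∀ n, u (n + 1) = ∑ j ∈ range (n + 1), f n j) (n : ℕ) :
    u (n + 2) = u (n + 1) + f (n + 1) (n + 1) + ∑ j ∈ range (n + 1), (f (n + 1) j - f n j) := by
  rw [hu, hu, sum_range_succ, sum_sub_distrib]
  ring

variable {s c : ℕ → R}

theorem succ_succ_eq_of_sum_range_mul_sub
    (hs : ∀ n : ℕ, s (n + 1) = ∑ j ∈ range (n + 1), (c j + ((n : R) - j) * s j)) (n : ℕ) :
    s (n + 2) = s (n + 1) + c (n + 1) + ∑ j ∈ range (n + 1), s j := by
  have hdiff : ∑ j ∈ range (n + 1), (c j + ((n + 1 : ℕ) - j) * s j - (c j + ((n : R) - j) * s j))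
      = ∑ j ∈ range (n + 1), s j := sum_congr rfl fun j _ => by push_cast; ring
  rw [succ_succ_eq_of_forall_eq_sum_range hs, hdiff]
  push_cast
  ring

theorem succ_succ_succ_eq_of_sum_range_mul_sub
    (hc : ∀ n : ℕ, c (n + 1) =
      ∑ j ∈ range (n + 1), ((n : R) + 1 - j) * (c j + ((n : R) - j) * s j)) (n : ℕ) :
    c (n + 3) = 3 * c (n + 2) - c (n + 1) + 2 * ∑ j ∈ range (n + 2), s j := by
  have hc' (m : ℕ) : c (m + 1 + 1) - 2 * c (m + 1) =
      ∑ j ∈ range (m + 1), (c j + 2 * ((m : R) + 1 - j) * s j) := by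
    have hdiff : ∑ j ∈ range (m + 1),
        ((((m + 1 : ℕ) : R) + 1 - j) * (c j + ((m + 1 : ℕ) - j) * s j)
          - ((m : R) + 1 - j) * (c j + ((m : R) - j) * s j))
        = ∑ j ∈ range (m + 1), (c j + 2 * ((m : R) + 1 - j) * s j) :=
      sum_congr rfl fun j _ => by push_cast; ring
    rw [succ_succ_eq_of_forall_eq_sum_range hc, hdiff]
    push_cast
    ring
  have hdiff : ∑ j ∈ range (n + 1), (c j + 2 * (((n + 1 : ℕ) : R) + 1 - j) * s j
      - (c j + 2 * ((n : R) + 1 - j) * s j)) = 2 * ∑ j ∈ range (n + 1), s j := by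
    rw [mul_sum]
    exact sum_congr rfl fun j _ => by push_cast; ring
  have h := succ_succ_eq_of_forall_eq_sum_range (u := fun m => c (m + 1) - 2 * c m) hc' n
  rw [hdiff] at h
  rw [sum_range_succ]
  push_cast at h
  linear_combination h

theorem linear_recurrence_of_sum_range
    (hs : ∀ n : ℕ, s (n + 1) = ∑ j ∈ range (n + 1), (c j + ((n : R) - j) * s j))
    (hc : ∀ n : ℕ, c (n + 1) =
      ∑ j ∈ range (n + 1), ((n : R) + 1 - j) * (c j + ((n : R) - j) * s j)) (n : ℕ) :
    s (n + 5) = 5 * s (n + 4) - 7 * s (n + 3) + 4 * s (n + 2) := by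
  have hs' := succ_succ_eq_of_sum_range_mul_sub hs
  have h4 (m : ℕ) : s (m + 4) =
      4 * s (m + 3) - 3 * s (m + 2) + s (m + 1) + ∑ j ∈ range (m + 1), s j := by
    linear_combination hs' (m + 2) - 3 * hs' (m + 1) + hs' m
      + succ_succ_succ_eq_of_sum_range_mul_sub hc m + sum_range_succ s (m + 2)
  linear_combination h4 (n + 1) - h4 n + sum_range_succ s (n + 1)

end LinearRecurrence

theorem slidingWeight_singleton (a : ℕ) : slidingWeight [a] = 1 := rfl

theorem slidingWeight_cons_cons (a b : ℕ) (l : List ℕ) :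
    slidingWeight (a :: b :: l) = (a + b - 1) * slidingWeight (b :: l) := by
  simp [slidingWeight]

theorem slidingWeight_one_cons (a : ℕ) (l : List ℕ) :
    slidingWeight (1 :: a :: l) = a * slidingWeight (a :: l) := by
  rw [slidingWeight_cons_cons, Nat.add_sub_cancel_left]

theorem slidingWeight_cons_eq_affine {a : ℕ} (ha : 1 ≤ a) (l : List ℕ) :
    (slidingWeight (a :: l) : ℤ) = slidingWeight (1 :: l) +
      ((a : ℤ) - 1) * (slidingWeight (2 :: l) - slidingWeight (1 :: l)) := by
  cases l with
  | nil => simp [slidingWeight_singleton]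
  | cons b l =>
    simp only [slidingWeight_cons_cons, Nat.add_sub_cancel_left]
    push_cast [show a + b - 1 = (a - 1) + b by omega, show 2 + b - 1 = b + 1 by omega,
      Nat.cast_sub ha]
    ring

theorem slidingWeight_two_cons_sub_one_cons {l : List ℕ} (hl : l ≠ []) :
    (slidingWeight (2 :: l) : ℤ) - slidingWeight (1 :: l) = slidingWeight l := by
  obtain ⟨b, l, rfl⟩ := List.exists_cons_of_ne_nil hl
  simp only [slidingWeight_cons_cons]
  push_cast [show 2 + b - 1 = b + 1 by omega, show 1 + b - 1 = b by omega]
  ring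

/-! `slopeSum j = S j` for `j > 0`, but `slopeSum 0 = 0` and `oneConsSum 0 = 1`: with these
values a last block needs no separate treatment in the first-block decomposition. -/

def oneConsSum (j : ℕ) : ℤ := ∑ c : Composition j, (slidingWeight (1 :: c.blocks) : ℤ)

def slopeSum (j : ℕ) : ℤ :=
  ∑ c : Composition j, ((slidingWeight (2 :: c.blocks) : ℤ) - slidingWeight (1 :: c.blocks))

theorem sum_slidingWeight_cons {a : ℕ} (ha : 1 ≤ a) (j : ℕ) :
    ∑ c : Composition j, (slidingWeight (a :: c.blocks) : ℤ) =
      oneConsSum j + ((a : ℤ) - 1) * slopeSum j := by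
  simp only [slidingWeight_cons_eq_affine ha, sum_add_distrib, ← mul_sum, oneConsSum, slopeSum]

theorem S_succ_eq_sum_range (n : ℕ) :
    (S (n + 1) : ℤ) = ∑ j ∈ range (n + 1), (oneConsSum j + ((n : ℤ) - j) * slopeSum j) := by
  rw [S, Nat.cast_sum, Composition.sum_succ_eq_sum_range_cons (fun l => (slidingWeight l : ℤ))]
  refine sum_congr rfl fun j hj => ?_
  have hj : j < n + 1 := mem_range.mp hj
  rw [sum_slidingWeight_cons (by omega)]
  push_cast [Nat.cast_sub hj.le]
  ring

theorem oneConsSum_succ (n : ℕ) :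
    oneConsSum (n + 1) = ∑ j ∈ range (n + 1),
      ((n : ℤ) + 1 - j) * (oneConsSum j + ((n : ℤ) - j) * slopeSum j) := by
  rw [oneConsSum, Composition.sum_succ_eq_sum_range_cons (fun l => (slidingWeight (1 :: l) : ℤ))]
  refine sum_congr rfl fun j hj => ?_
  have hj : j < n + 1 := mem_range.mp hj
  simp only [slidingWeight_one_cons, Nat.cast_mul, ← mul_sum]
  rw [sum_slidingWeight_cons (by omega)]
  push_cast [Nat.cast_sub hj.le]
  ring

theorem slopeSum_succ (n : ℕ) : slopeSum (n + 1) = S (n + 1) := by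
  rw [slopeSum, S, Nat.cast_sum]
  refine sum_congr rfl fun c _ => slidingWeight_two_cons_sub_one_cons ?_
  obtain ⟨a, t, -, -, h⟩ := c.exists_blocks_eq_cons
  simp [h]

/-- The sequence `S` satisfies `S(N) = 5·S(N-1) − 7·S(N-2) + 4·S(N-3)` for `N ≥ 5`. -/
theorem S_linear_recurrence (N : ℕ) (hN : 5 ≤ N) :
    (S N : ℤ) = 5 * S (N - 1) - 7 * S (N - 2) + 4 * S (N - 3) := by
  obtain ⟨n, rfl⟩ := Nat.exists_eq_add_of_le' hN
  have hs (m : ℕ) : slopeSum (m + 1) =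
      ∑ j ∈ range (m + 1), (oneConsSum j + ((m : ℤ) - j) * slopeSum j) := by
    rw [slopeSum_succ, S_succ_eq_sum_range]
  have h := linear_recurrence_of_sum_range hs oneConsSum_succ n
  rwa [slopeSum_succ, slopeSum_succ, slopeSum_succ, slopeSum_succ] at h
end

section
/- For m ≥ 1 let F_m(x) be the formal power series whose coefficient of x^N is the sum, over compositions of N with last part equal to m, of the product ∏(π_i + π_{i+1} − 1). Then F_m satisfies F_m(x) = x^m + x^m ∑_{l ≥ 1} (l + m − 1) F_l(x). -/
/-!
Deleting the last part `m` of a composition of `N` ending in `m` leaves a composition of `N - m`;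
this is a bijection. For `N = m` only the empty composition remains, which gives the term `x^m`;
otherwise the weight loses exactly the factor `l + m - 1`, where `l` is the new last part.
-/

open PowerSeries

/-- `F m`: the power series whose coefficient of `xᴺ` is the sum of the
sliding weight over compositions of `N` whose last part equals `m`. -/
noncomputable def F (m : ℕ) : ℚ⟦X⟧ :=
  PowerSeries.mk fun N =>
    ((∑ c : Composition N,
        if c.blocks.getLast? = some m then slidingWeight c.blocks else 0 : ℕ) : ℚ)

def lastPartWeight (n m : ℕ) : ℕ :=
  ∑ c : Composition n, if c.blocks.getLast? = some m then slidingWeight c.blocks else 0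

lemma coeff_F (m n : ℕ) : coeff n (F m) = lastPartWeight n m := by
  simp [F, lastPartWeight]

lemma slidingWeight_append_singleton {l : List ℕ} {a : ℕ} (h : l.getLast? = some a) (b : ℕ) :
    slidingWeight (l ++ [b]) = slidingWeight l * (a + b - 1) := by
  induction l with
  | nil => simp at h
  | cons x t ih =>
    cases t with
    | nil => simp_all [slidingWeight]
    | cons y s =>
      rw [List.getLast?_cons_cons] at h
      simp only [List.cons_append, slidingWeight, List.tail_cons, List.zip_cons_cons,
        List.map_cons, List.prod_cons] at ih ⊢
      rw [ih h, mul_assoc]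

lemma lastPartWeight_eq_zero_of_lt {n m : ℕ} (h : n < m) : lastPartWeight n m = 0 :=
  Finset.sum_eq_zero fun c _ => if_neg fun hc => h.not_ge (c.blocks_le (List.mem_of_getLast? hc))

namespace Composition

def appendSingleEquiv (n : ℕ) {m : ℕ} (hm : 0 < m) :
    Composition n ≃ {c : Composition (n + m) // c.blocks.getLast? = some m} where
  toFun c := ⟨c.append (single m hm), by simp⟩
  invFun c :=
    { blocks := c.1.blocks.dropLast
      blocks_pos := fun hi => c.1.blocks_pos (List.dropLast_subset _ hi)
      blocks_sum := by
        have := congrArg List.sum (List.dropLast_append_getLast? m c.2)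
        rw [List.sum_append, c.1.blocks_sum] at this
        simpa using this }
  left_inv c := by ext1; simp
  right_inv c := Subtype.ext <| Composition.ext <| List.dropLast_append_getLast? m c.2

lemma exists_getLast?_eq_mem_Icc {n : ℕ} (hn : n ≠ 0) (c : Composition n) :
    ∃ a ∈ Finset.Icc 1 n, c.blocks.getLast? = some a := by
  have hne : c.blocks ≠ [] := fun h => hn (c.blocks_eq_nil.1 h)
  have hmem := List.getLast_mem hne
  exact ⟨_, Finset.mem_Icc.2 ⟨c.one_le_blocks hmem, c.blocks_le hmem⟩,
    List.getLast?_eq_some_getLast hne⟩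

end Composition

lemma lastPartWeight_add_self (n : ℕ) {m : ℕ} (hm : 0 < m) :
    lastPartWeight (n + m) m = ∑ c : Composition n, slidingWeight (c.blocks ++ [m]) := by
  rw [lastPartWeight, ← Finset.sum_filter,
    Finset.sum_subtype _ (p := fun c : Composition (n + m) => c.blocks.getLast? = some m)
      (by simp)]
  exact (Fintype.sum_equiv (Composition.appendSingleEquiv n hm) _ _ fun c => rfl).symm

lemma sum_slidingWeight_append_singleton {n : ℕ} (hn : n ≠ 0) (m : ℕ) :
    ∑ c : Composition n, slidingWeight (c.blocks ++ [m])
      = ∑ l ∈ Finset.Icc 1 n, (l + m - 1) * lastPartWeight n l := by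
  have hsplit (c : Composition n) : slidingWeight (c.blocks ++ [m])
      = ∑ l ∈ Finset.Icc 1 n,
          if c.blocks.getLast? = some l then (l + m - 1) * slidingWeight c.blocks else 0 := by
    obtain ⟨a, ha, hc⟩ := c.exists_getLast?_eq_mem_Icc hn
    simp only [hc, Option.some.injEq, Finset.sum_ite_eq, ha, if_true,
      slidingWeight_append_singleton hc, mul_comm]
  simp only [hsplit, lastPartWeight, Finset.mul_sum, mul_ite, mul_zero]
  exact Finset.sum_comm

lemma lastPartWeight_self {m : ℕ} (hm : 0 < m) : lastPartWeight m m = 1 := by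
  have hnil (c : Composition 0) : c.blocks = [] := c.blocks_eq_nil.2 rfl
  simpa [hnil, slidingWeight, composition_card] using lastPartWeight_add_self 0 hm

/-- Transfer relation `F_m(x) = x^m + x^m ∑_{l ≥ 1} (l + m − 1) F_l(x)`,
stated coefficientwise (the sum over `l` is coefficientwise finite since
`F_l` has lowest-order term `x^l`, so only `l ≤ N` contribute). -/
theorem transfer_relation (m : ℕ) (hm : 1 ≤ m) (N : ℕ) :
    (PowerSeries.coeff (R := ℚ) N) (F m)
      = (PowerSeries.coeff (R := ℚ) N) (X ^ m)
        + ∑ l ∈ Finset.Icc 1 N,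
            ((l + m - 1 : ℕ) : ℚ) * (PowerSeries.coeff (R := ℚ) N) (X ^ m * F l) := by
  simp only [coeff_X_pow_mul', coeff_F, coeff_X_pow]
  rcases lt_or_ge N m with hNm | hmN
  · simp [lastPartWeight_eq_zero_of_lt hNm, hNm.ne, hNm.not_ge]
  obtain ⟨n, rfl⟩ := Nat.exists_eq_add_of_le' hmN
  simp only [le_add_iff_nonneg_left, zero_le, if_true, add_tsub_cancel_right, add_eq_right]
  have hvanish : ∀ l ∈ Finset.Icc 1 (n + m), l ∉ Finset.Icc 1 n →
      ((l + m - 1 : ℕ) : ℚ) * lastPartWeight n l = 0 := fun l hl hl' => by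
    have hnl : n < l := by simp only [Finset.mem_Icc] at hl hl'; omega
    rw [lastPartWeight_eq_zero_of_lt hnl, Nat.cast_zero, mul_zero]
  rw [← Finset.sum_subset (Finset.Icc_subset_Icc_right (Nat.le_add_right n m)) hvanish]
  rcases eq_or_ne n 0 with rfl | hn
  · simp [lastPartWeight_self hm]
  rw [lastPartWeight_add_self n hm, sum_slidingWeight_append_singleton hn]
  simp [hn]
end
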